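/- Let P(z) = (1/80640)·(40320 + 945·6^{7/9}·35^{8/9}·z − 5040·6^{1/3}·35^{2/3}·z³ + 3024·6^{8/9}·35^{4/9}·z⁵ − 5760·6^{4/9}·35^{2/9}·z⁷ + 4480·z⁹), a degree-9 polynomial with real coefficients, and let β = (315/128)^{1/9} > 0, so that −β is the unique real root of 315 + 128z⁹ = 0. Then P′(z) = (1/2)·(z² − β²)⁴, P(β) = 1 and P(−β) = 0. In particular P is a Belyi polynomial with exactly two critical points ±β, each a zero of P′ of order 4, with critical values 1 and 0 respectively. -/

import Mathlib

noncomputable section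

/-- `β = (315/128)^{1/9}`. -/
def β : ℝ := ((315 : ℝ) / 128) ^ ((1 : ℝ) / 9)

/-- The normalized Belyi polynomial `(B̄₉⁴(z)+1)/2`. -/
def P : ℂ → ℂ := fun z =>
  (1 / 80640) * (40320
    + ((945 * (6 : ℝ) ^ ((7 : ℝ) / 9) * (35 : ℝ) ^ ((8 : ℝ) / 9) : ℝ) : ℂ) * z
    - ((5040 * (6 : ℝ) ^ ((1 : ℝ) / 3) * (35 : ℝ) ^ ((2 : ℝ) / 3) : ℝ) : ℂ) * z ^ 3
    + ((3024 * (6 : ℝ) ^ ((8 : ℝ) / 9) * (35 : ℝ) ^ ((4 : ℝ) / 9) : ℝ) : ℂ) * z ^ 5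
    - ((5760 * (6 : ℝ) ^ ((4 : ℝ) / 9) * (35 : ℝ) ^ ((2 : ℝ) / 9) : ℝ) : ℂ) * z ^ 7
    + 4480 * z ^ 9)


/-!
Each coefficient `c · 6^{m/9} · 35^{n/9}` of `P` is a rational multiple of a power of `β`, as one
sees by comparing ninth powers and using `β⁹ = 315/128`. Hence `P(z) = 1/2 + ∫₀ᶻ (w² - β²)⁴/2 dw`,
so `P' = (z - β)⁴ (z + β)⁴ / 2`, whose roots `±β` have multiplicity exactly `4`, and
`P(±β) = 1/2 ± (16384/80640) β⁹ = 1/2 ± 1/2`. The order of vanishing of the iterated derivatives of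
`P` at `±β` is then read off from the root multiplicities of the polynomial `P'`.
-/

open Polynomial

namespace Polynomial

theorem rootMultiplicity_C_mul_X_sub_C_pow_mul_X_sub_C_pow {K : Type*} [Field K] {u a c : K}
    (hu : u ≠ 0) (hac : a ≠ c) (m n : ℕ) :
    (C u * (X - C a) ^ m * (X - C c) ^ n).rootMultiplicity a = m := by
  have hne : C u * (X - C c) ^ n ≠ 0 :=
    mul_ne_zero (C_ne_zero.2 hu) (pow_ne_zero _ (X_sub_C_ne_zero c))
  have hroot : ¬ (C u * (X - C c) ^ n).IsRoot a := by simp [hu, sub_ne_zero.2 hac]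
  rw [mul_right_comm, rootMultiplicity_mul_X_sub_C_pow hne, rootMultiplicity_eq_zero hroot,
    zero_add]

variable {𝕜 : Type*} [NontriviallyNormedField 𝕜]

theorem iteratedDeriv_eval (p : 𝕜[X]) (k : ℕ) :
    iteratedDeriv k (fun x => p.eval x) = fun x => (derivative^[k] p).eval x := by
  induction k generalizing p with
  | zero => simp
  | succ k ih =>
    have hderiv : deriv (fun x => p.eval x) = fun x => p.derivative.eval x :=
      _root_.funext fun _ => p.deriv
    rw [iteratedDeriv_succ', hderiv, ih, Function.iterate_succ_apply]

theorem iteratedDeriv_eval_of_rootMultiplicity_derivative [CharZero 𝕜] {p : 𝕜[X]} {a : 𝕜}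
    {n : ℕ} (hp : derivative p ≠ 0) (hn : (derivative p).rootMultiplicity a = n) :
    (∀ k, 1 ≤ k → k ≤ n → iteratedDeriv k (fun x => p.eval x) a = 0) ∧
      iteratedDeriv (n + 1) (fun x => p.eval x) a ≠ 0 := by
  have hsucc (m : ℕ) :
      iteratedDeriv (m + 1) (fun x => p.eval x) a = (derivative^[m] (derivative p)).eval a := by
    rw [iteratedDeriv_eval, Function.iterate_succ_apply]
  refine ⟨fun k hk1 hkn => ?_, fun hroot => ?_⟩
  · obtain ⟨m, rfl⟩ := Nat.exists_eq_add_of_le' hk1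
    rw [hsucc]
    exact isRoot_iterate_derivative_of_lt_rootMultiplicity (by omega)
  · rw [hsucc] at hroot
    have : n < (derivative p).rootMultiplicity a :=
      lt_rootMultiplicity_of_isRoot_iterate_derivative hp fun m hm => by
        rcases hm.lt_or_eq with hlt | rfl
        · exact isRoot_iterate_derivative_of_lt_rootMultiplicity (by omega)
        · exact hroot
    omega

end Polynomial

section BelyiNonic

variable {K : Type*} [Field K] [CharZero K]

/-- `1/2 + ∫₀ᶻ (w² - b²)⁴/2 dw`, written to match `P` term by term. -/
def belyiNonic (b : K) : K[X] :=
  C (1 / 80640) * (40320 + 40320 * C (b ^ 8) * X - 53760 * C (b ^ 6) * X ^ 3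
    + 48384 * C (b ^ 4) * X ^ 5 - 23040 * C (b ^ 2) * X ^ 7 + 4480 * X ^ 9)

theorem derivative_belyiNonic (b : K) :
    derivative (belyiNonic b) = C (1 / 2) * (X - C b) ^ 4 * (X - C (-b)) ^ 4 := by
  have half : C (1 / 2 : K) = 40320 * C (1 / 80640) := by
    rw [← map_ofNat C, ← C_mul]; norm_num
  simp only [belyiNonic, derivative_mul, derivative_C, derivative_add, derivative_sub,
    derivative_X_pow, derivative_X, derivative_ofNat, map_natCast]
  simp only [half, map_neg, C_pow]
  ring

theorem eval_belyiNonic_self {b : K} (hb : b ^ 9 = 315 / 128) : (belyiNonic b).eval b = 1 := by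
  simp only [belyiNonic, eval_mul, eval_C, eval_add, eval_sub, eval_X, eval_pow, eval_ofNat]
  linear_combination (16384 / 80640 : K) * hb

theorem eval_belyiNonic_neg_self {b : K} (hb : b ^ 9 = 315 / 128) :
    (belyiNonic b).eval (-b) = 0 := by
  simp only [belyiNonic, eval_mul, eval_C, eval_add, eval_sub, eval_X, eval_pow, eval_ofNat]
  linear_combination (-16384 / 80640 : K) * hb

theorem isRoot_derivative_belyiNonic_iff {b z : K} :
    (derivative (belyiNonic b)).IsRoot z ↔ z = b ∨ z = -b := by
  simp [derivative_belyiNonic, sub_eq_zero, add_eq_zero_iff_eq_neg]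

theorem rootMultiplicity_derivative_belyiNonic {b a : K} (hb : b ≠ 0) (ha : a = b ∨ a = -b) :
    (derivative (belyiNonic b)).rootMultiplicity a = 4 := by
  have hb' : b ≠ -b := fun h => hb (CharZero.eq_neg_self_iff.1 h)
  rw [derivative_belyiNonic]
  rcases ha with rfl | rfl
  · exact rootMultiplicity_C_mul_X_sub_C_pow_mul_X_sub_C_pow (by norm_num) hb' 4 4
  · rw [mul_right_comm]
    exact rootMultiplicity_C_mul_X_sub_C_pow_mul_X_sub_C_pow (by norm_num) hb'.symm 4 4

end BelyiNonic

theorem Real.rpow_pow_of_mul_eq {x a : ℝ} {n m : ℕ} (hx : 0 ≤ x) (h : a * n = m) :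
    (x ^ a) ^ n = x ^ m := by
  rw [← Real.rpow_mul_natCast hx, h, Real.rpow_natCast]

theorem β_pos : 0 < β := Real.rpow_pos_of_pos (by norm_num) _

theorem β_pow_nine : β ^ 9 = 315 / 128 := by
  rw [β, one_div]
  exact_mod_cast Real.rpow_inv_natCast_pow (by norm_num : (0 : ℝ) ≤ 315 / 128) (by norm_num : 9 ≠ 0)

theorem add_mul_pow_nine_eq_zero_iff (t : ℝ) : 315 + 128 * t ^ 9 = 0 ↔ t = -β := by
  have h9 : Odd 9 := by decide
  rw [← h9.pow_inj (a := t), h9.neg_pow, β_pow_nine]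
  constructor <;> intro h <;> linarith

theorem mul_rpow_mul_rpow_eq_mul_β_pow {c d a e : ℝ} {m n k : ℕ} (ha : a * 9 = m)
    (he : e * 9 = n) (h : c ^ 9 * 6 ^ m * 35 ^ n = d ^ 9 * (315 / 128) ^ k) :
    c * 6 ^ a * 35 ^ e = d * β ^ k := by
  apply (Odd.pow_inj (n := 9) ⟨4, rfl⟩).1
  rw [mul_pow, mul_pow, mul_pow, Real.rpow_pow_of_mul_eq (by norm_num) (by exact_mod_cast ha),
    Real.rpow_pow_of_mul_eq (by norm_num) (by exact_mod_cast he), ← pow_mul, mul_comm k, pow_mul,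
    β_pow_nine]
  exact h

theorem P_eq_eval_belyiNonic : P = fun z => (belyiNonic (β : ℂ)).eval z := by
  have c1 : 945 * (6 : ℝ) ^ ((7 : ℝ) / 9) * (35 : ℝ) ^ ((8 : ℝ) / 9) = 40320 * β ^ 8 :=
    mul_rpow_mul_rpow_eq_mul_β_pow (m := 7) (n := 8) (by norm_num) (by norm_num) (by norm_num)
  have c3 : 5040 * (6 : ℝ) ^ ((1 : ℝ) / 3) * (35 : ℝ) ^ ((2 : ℝ) / 3) = 53760 * β ^ 6 :=
    mul_rpow_mul_rpow_eq_mul_β_pow (m := 3) (n := 6) (by norm_num) (by norm_num) (by norm_num)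
  have c5 : 3024 * (6 : ℝ) ^ ((8 : ℝ) / 9) * (35 : ℝ) ^ ((4 : ℝ) / 9) = 48384 * β ^ 4 :=
    mul_rpow_mul_rpow_eq_mul_β_pow (m := 8) (n := 4) (by norm_num) (by norm_num) (by norm_num)
  have c7 : 5760 * (6 : ℝ) ^ ((4 : ℝ) / 9) * (35 : ℝ) ^ ((2 : ℝ) / 9) = 23040 * β ^ 2 :=
    mul_rpow_mul_rpow_eq_mul_β_pow (m := 4) (n := 2) (by norm_num) (by norm_num) (by norm_num)
  funext z
  simp only [P, belyiNonic, c1, c3, c5, c7, eval_mul, eval_C, eval_add, eval_sub, eval_X,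
    eval_pow, eval_ofNat]
  push_cast
  ring

/-- `β > 0`, `-β` is the unique real root of `315 + 128z⁹ = 0`,
`P'(z) = (1/2)(z² - β²)⁴`, `P(β) = 1`, `P(-β) = 0`; so `P` is a Belyi polynomial with exactly
two critical points `±β`, each a zero of `P'` of order 4, with critical values `1` and `0`. -/
theorem stmt18 :
    0 < β ∧
    (∀ t : ℝ, 315 + 128 * t ^ 9 = 0 ↔ t = -β) ∧
    (∀ z : ℂ, deriv P z = (1 / 2) * (z ^ 2 - ((β : ℂ)) ^ 2) ^ 4) ∧
    P (β : ℂ) = 1 ∧ P (-(β : ℂ)) = 0 ∧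
    (∀ z : ℂ, deriv P z = 0 ↔ (z = (β : ℂ) ∨ z = -(β : ℂ))) ∧
    (∀ z : ℂ, deriv P z = 0 → P z = 0 ∨ P z = 1) ∧
    (∀ z₀ : ℂ, (z₀ = (β : ℂ) ∨ z₀ = -(β : ℂ)) →
      (∀ k : ℕ, 1 ≤ k → k ≤ 4 → iteratedDeriv k P z₀ = 0) ∧ iteratedDeriv 5 P z₀ ≠ 0) := by
  have hb : (β : ℂ) ^ 9 = 315 / 128 := by rw [← Complex.ofReal_pow, β_pow_nine]; norm_num
  have hb0 : (β : ℂ) ≠ 0 := Complex.ofReal_ne_zero.2 β_pos.ne'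
  have hderiv (z : ℂ) : deriv P z = (derivative (belyiNonic (β : ℂ))).eval z := by
    rw [P_eq_eval_belyiNonic, Polynomial.deriv]
  have hcrit (z : ℂ) : deriv P z = 0 ↔ z = β ∨ z = -β := by
    rw [hderiv]; exact isRoot_derivative_belyiNonic_iff
  have hPβ : P β = 1 := by rw [P_eq_eval_belyiNonic]; exact eval_belyiNonic_self hb
  have hPnegβ : P (-β) = 0 := by rw [P_eq_eval_belyiNonic]; exact eval_belyiNonic_neg_self hb
  refine ⟨β_pos, add_mul_pow_nine_eq_zero_iff, fun z => ?_, hPβ, hPnegβ, hcrit, fun z hz => ?_,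
    fun z₀ hz₀ => ?_⟩
  · rw [hderiv, derivative_belyiNonic]
    simp only [eval_mul, eval_C, eval_pow, eval_sub, eval_X]
    ring
  · rcases (hcrit z).1 hz with rfl | rfl
    exacts [Or.inr hPβ, Or.inl hPnegβ]
  · have hmult := rootMultiplicity_derivative_belyiNonic hb0 hz₀
    have hne : derivative (belyiNonic (β : ℂ)) ≠ 0 := fun h => by simp [h] at hmult
    rw [P_eq_eval_belyiNonic]
    exact iteratedDeriv_eval_of_rootMultiplicity_derivative hne hmult
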